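/- For every real ν > 0 and every real u > 0, the second q-Bessel function satisfies ∂^q_u ( u^{ν} J^{(2)}_ν(u|q²) ) = q^{ν} u^{ν} J^{(2)}_{ν−1}(qu|q²). -/

import Mathlib

open scoped BigOperators

noncomputable section

/-- The q-number `[u]_q = (q^u - 1)/(q - 1)`. -/
def qNum (q u : ℝ) : ℝ := (q ^ u - 1) / (q - 1)

/-- The q-factorial `[n]_q! = ∏_{i=1}^n [i]_q`. -/
def qFact (q : ℝ) (n : ℕ) : ℝ := ∏ i ∈ Finset.range n, qNum q ((i : ℝ) + 1)

/-- The q-Gamma function `Γ_q(t) = (1-q)^{1-t} ∏_{k=0}^∞ (1-q^{k+1})/(1-q^{k+t})`. -/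
def qGamma (q t : ℝ) : ℝ :=
  (1 - q) ^ (1 - t) * ∏' k : ℕ, (1 - q ^ (k + 1)) / (1 - q ^ ((k : ℝ) + t))

/-- The q-derivative `∂^q_t f(t) = (f(qt) - f(t))/((q-1)t)`.
The `q⁻¹`-derivative is `qDeriv q⁻¹`. -/
def qDeriv (q : ℝ) (f : ℝ → ℝ) (t : ℝ) : ℝ := (f (q * t) - f t) / ((q - 1) * t)

/-- The q-Pochhammer symbol `(a; q)_k = ∏_{l=0}^{k-1} (1 - a q^l)`. -/
def qPoch (a q : ℝ) (k : ℕ) : ℝ := ∏ l ∈ Finset.range k, (1 - a * q ^ l)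

/-- The q-exponential `E_q(t) = ∑_{j=0}^∞ q^{j(j-1)/2} t^j/[j]_q!`. -/
def qExpE (q t : ℝ) : ℝ := ∑' j : ℕ, q ^ (j * (j - 1) / 2) * t ^ j / qFact q j

/-- `e_q(-u) := 1/E_q(u)` (intended for `u ≥ 0`); `qExpe q u` denotes `e_q(-u)`. -/
def qExpe (q u : ℝ) : ℝ := (qExpE q u)⁻¹

/-- The first q-Bessel function `J^{(1)}_ν(x|q²)`. -/
def qBessel1 (q ν x : ℝ) : ℝ :=
  (x / (1 + q)) ^ ν *
    ∑' i : ℕ, (-1 : ℝ) ^ i / (qFact (q ^ 2) i * qGamma (q ^ 2) ((i : ℝ) + ν + 1)) *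
      (x / (1 + q)) ^ (2 * i)

/-- The second q-Bessel function `J^{(2)}_ν(x|q²)`. -/
def qBessel2 (q ν x : ℝ) : ℝ :=
  q ^ (ν ^ 2) * (x / (1 + q)) ^ ν *
    ∑' i : ℕ, q ^ (2 * (i : ℝ) * ((i : ℝ) + ν)) * (-1 : ℝ) ^ i /
        (qFact (q ^ 2) i * qGamma (q ^ 2) ((i : ℝ) + ν + 1)) *
      (x / (1 + q)) ^ (2 * i)

/-- The q-Laguerre polynomial `𝓛^{(α)}_j(u|q²)`. -/
def qLaguerre (q α : ℝ) (j : ℕ) (u : ℝ) : ℝ :=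
  ∑ i ∈ Finset.range (j + 1),
    q ^ ((j - i) * (j - i + 1)) * (-u) ^ i / (qFact (q ^ 2) (j - i) * qFact (q ^ 2) i) *
      (qPoch (q ^ (2 * (i : ℝ) + 2 * α + 2)) (q ^ 2) (j - i) / (1 - q ^ 2) ^ (j - i))

/-- The q-Laguerre polynomial `𝓛^{(α)}_j(u|q^{-2})`. -/
def qLaguerreInv (q α : ℝ) (j : ℕ) (u : ℝ) : ℝ :=
  q ^ (-(j : ℝ) * ((j : ℝ) + 1 + 2 * α)) *
    ∑ i ∈ Finset.range (j + 1),
      q ^ (2 * (i : ℝ) * ((i : ℝ) + α)) * (-u) ^ i / (qFact (q ^ 2) (j - i) * qFact (q ^ 2) i) *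
        (qPoch (q ^ (2 * (i : ℝ) + 2 * α + 2)) (q ^ 2) (j - i) / (1 - q ^ 2) ^ (j - i))

/-- The finite Jackson q-integral `∫_0^a f(t) d_q t = (1-q) a ∑_{k=0}^∞ f(q^k a) q^k`. -/
def jackson (q a : ℝ) (f : ℝ → ℝ) : ℝ := (1 - q) * a * ∑' k : ℕ, f (q ^ k * a) * q ^ k

/-- The infinite Jackson q-integral `∫_0^{γ·∞} f(t) d_q t = (1-q) γ ∑_{k=-∞}^∞ f(q^k γ) q^k`. -/
def jacksonInf (q γ : ℝ) (f : ℝ → ℝ) : ℝ := (1 - q) * γ * ∑' k : ℤ, f (q ^ k * γ) * q ^ k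

/-- The first q-Hankel transform `𝓗̄^{q,β}_ν`. -/
def hankel1 (q μ ν β : ℝ) (f : ℝ → ℝ) (t : ℝ) : ℝ :=
  (1 + q) / μ * jackson q (Real.sqrt (μ / ((1 - q ^ 2) * β)))
    (fun r => qBessel1 q ν ((1 + q) / μ * (r * t)) / (r * t) ^ ν * r ^ (2 * ν + 1) * f r)

/-- The second q-Hankel transform `𝓗^{q,γ}_ν`. -/
def hankel2 (q μ ν γ : ℝ) (f : ℝ → ℝ) (r : ℝ) : ℝ :=
  (1 + q) / μ * jacksonInf q γ
    (fun t => qBessel2 q ν (q * ((1 + q) / μ) * (r * t)) / (r * t) ^ ν * t ^ (2 * ν + 1) * f t)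

/-!
Write `J^{(2)}_ν(x) = q^{ν²} (x/(1+q))^ν S_ν(x/(1+q))` with `S_ν(y) = ∑ c_ν(i) y^{2i}`. The claim
reduces to `q^{2ν} S_ν(qy) - S_ν(y) = (q² - 1) S_{ν-1}(qy)`, which holds coefficientwise because
`c_ν(i) (q^{2(i+ν)} - 1) = (q² - 1) q^{2i} c_{ν-1}(i)`. That is the functional equation
`Γ_{q²}(t + 1) = [t]_{q²} Γ_{q²}(t)`, read off from `Γ_q(t) = (1-q)^{1-t} (q;q)_∞ / (q^t;q)_∞` and
`(a;q)_∞ = (1 - a) (aq;q)_∞`. The series converge since the Gaussian factor `q^{2i(i+ν)}` wins and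
`Γ_{q²} ≥ (q²;q²)_∞` on `[1, ∞)`.
-/

open Real Filter Topology

def qPochInf (a q : ℝ) : ℝ := ∏' k : ℕ, (1 - a * q ^ k)

section qPochInf

variable {a q : ℝ}

lemma summable_log_one_sub_mul_pow (hq : |q| < 1) :
    Summable fun k : ℕ => log (1 - a * q ^ k) := by
  simpa only [sub_eq_add_neg] using
    Real.summable_log_one_add_of_summable ((summable_geometric_of_abs_lt_one hq).mul_left a).neg

lemma one_sub_mul_pow_pos (ha0 : 0 ≤ a) (ha1 : a < 1) (hq0 : 0 ≤ q) (hq1 : q ≤ 1) (k : ℕ) :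
    0 < 1 - a * q ^ k := by
  have : a * q ^ k ≤ a := mul_le_of_le_one_right ha0 (pow_le_one₀ hq0 hq1)
  linarith

lemma qPochInf_eq_exp_tsum (ha0 : 0 ≤ a) (ha1 : a < 1) (hq0 : 0 ≤ q) (hq1 : q < 1) :
    qPochInf a q = exp (∑' k : ℕ, log (1 - a * q ^ k)) :=
  (Real.rexp_tsum_eq_tprod (one_sub_mul_pow_pos ha0 ha1 hq0 hq1.le)
    (summable_log_one_sub_mul_pow (abs_lt.2 ⟨by linarith, hq1⟩))).symm

lemma qPochInf_pos (ha0 : 0 ≤ a) (ha1 : a < 1) (hq0 : 0 ≤ q) (hq1 : q < 1) :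
    0 < qPochInf a q := by
  rw [qPochInf_eq_exp_tsum ha0 ha1 hq0 hq1]
  exact exp_pos _

lemma qPochInf_le_one (ha0 : 0 ≤ a) (ha1 : a < 1) (hq0 : 0 ≤ q) (hq1 : q < 1) :
    qPochInf a q ≤ 1 := by
  rw [qPochInf_eq_exp_tsum ha0 ha1 hq0 hq1, exp_le_one_iff]
  refine tsum_nonpos fun k => log_nonpos (one_sub_mul_pow_pos ha0 ha1 hq0 hq1.le k).le ?_
  have := mul_nonneg ha0 (pow_nonneg hq0 k)
  linarith

lemma multipliable_one_sub_mul_pow (hq : |q| < 1) : Multipliable fun k : ℕ => 1 - a * q ^ k := by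
  simpa only [sub_eq_add_neg] using
    Real.multipliable_one_add_of_summable ((summable_geometric_of_abs_lt_one hq).mul_left a).neg

lemma qPochInf_eq_one_sub_mul (hq : |q| < 1) : qPochInf a q = (1 - a) * qPochInf (a * q) q := by
  have h := tprod_eq_zero_mul' (f := fun k : ℕ => 1 - a * q ^ k) ?_
  · simpa [qPochInf, pow_succ, mul_assoc, mul_comm q] using h
  · simpa [pow_succ, mul_assoc, mul_comm q] using multipliable_one_sub_mul_pow (a := a * q) hq

end qPochInf

section qGamma

variable {Q t : ℝ}

lemma qNum_pos (hQ0 : 0 < Q) (hQ1 : Q < 1) (ht : 0 < t) : 0 < qNum Q t :=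
  div_pos_of_neg_of_neg (by linarith [rpow_lt_one hQ0.le hQ1 ht]) (by linarith)

lemma one_le_qNum (hQ0 : 0 < Q) (hQ1 : Q < 1) (ht : 1 ≤ t) : 1 ≤ qNum Q t := by
  have : Q ^ t ≤ Q := by
    simpa using rpow_le_rpow_of_exponent_ge hQ0 hQ1.le ht
  rw [qNum, le_div_iff_of_neg (by linarith)]
  linarith

lemma one_le_qFact (hQ0 : 0 < Q) (hQ1 : Q < 1) (n : ℕ) : 1 ≤ qFact Q n :=
  Finset.one_le_prod fun i _ => one_le_qNum hQ0 hQ1 (by linarith [i.cast_nonneg (α := ℝ)])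

lemma qGamma_eq_qPochInf (hQ0 : 0 < Q) (hQ1 : Q < 1) (ht : 0 < t) :
    qGamma Q t = (1 - Q) ^ (1 - t) * (qPochInf Q Q / qPochInf (Q ^ t) Q) := by
  have hQ : |Q| < 1 := abs_lt.2 ⟨by linarith, hQ1⟩
  have hQt1 : Q ^ t < 1 := rpow_lt_one hQ0.le hQ1 ht
  have hfactor : ∀ k : ℕ, (1 - Q ^ (k + 1)) / (1 - Q ^ ((k : ℝ) + t)) =
      (1 - Q * Q ^ k) / (1 - Q ^ t * Q ^ k) := fun k => by
    rw [pow_succ', add_comm, rpow_add_natCast hQ0.ne']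
  rw [qGamma, tprod_congr hfactor, qPochInf, qPochInf,
    (multipliable_one_sub_mul_pow hQ).tprod_div₀ (multipliable_one_sub_mul_pow hQ)
      (qPochInf_pos (rpow_nonneg hQ0.le t) hQt1 hQ0.le hQ1).ne']

lemma qGamma_pos (hQ0 : 0 < Q) (hQ1 : Q < 1) (ht : 0 < t) : 0 < qGamma Q t := by
  rw [qGamma_eq_qPochInf hQ0 hQ1 ht]
  have := qPochInf_pos hQ0.le hQ1 hQ0.le hQ1
  have := qPochInf_pos (rpow_nonneg hQ0.le t) (rpow_lt_one hQ0.le hQ1 ht) hQ0.le hQ1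
  have := rpow_pos_of_pos (sub_pos.2 hQ1) (1 - t)
  positivity

lemma qGamma_add_one (hQ0 : 0 < Q) (hQ1 : Q < 1) (ht : 0 < t) :
    qGamma Q (t + 1) = qNum Q t * qGamma Q t := by
  have hQt1 : Q ^ t < 1 := rpow_lt_one hQ0.le hQ1 ht
  have hPt := qPochInf_pos (rpow_nonneg hQ0.le (t + 1)) (rpow_lt_one hQ0.le hQ1 (by linarith))
    hQ0.le hQ1
  rw [qGamma_eq_qPochInf hQ0 hQ1 ht, qGamma_eq_qPochInf hQ0 hQ1 (by linarith),
    qPochInf_eq_one_sub_mul (a := Q ^ t) (abs_lt.2 ⟨by linarith, hQ1⟩), ← rpow_add_one hQ0.ne',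
    show 1 - t = 1 - (t + 1) + 1 by ring, rpow_add_one (sub_pos.2 hQ1).ne', qNum]
  field_simp [(sub_neg.2 hQ1).ne, (sub_pos.2 hQ1).ne', (sub_pos.2 hQt1).ne', hPt.ne']
  ring

lemma qPochInf_le_qGamma (hQ0 : 0 < Q) (hQ1 : Q < 1) (ht : 1 ≤ t) :
    qPochInf Q Q ≤ qGamma Q t := by
  rw [qGamma_eq_qPochInf hQ0 hQ1 (by linarith)]
  have hP := qPochInf_pos hQ0.le hQ1 hQ0.le hQ1
  have hPt0 := qPochInf_pos (rpow_nonneg hQ0.le t) (rpow_lt_one hQ0.le hQ1 (by linarith))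
    hQ0.le hQ1
  have hPt1 := qPochInf_le_one (rpow_nonneg hQ0.le t) (rpow_lt_one hQ0.le hQ1 (by linarith))
    hQ0.le hQ1
  have hpow : 1 ≤ (1 - Q) ^ (1 - t) :=
    one_le_rpow_of_pos_of_le_one_of_nonpos (by linarith) (by linarith) (by linarith)
  calc qPochInf Q Q ≤ qPochInf Q Q / qPochInf (Q ^ t) Q := le_div_self hP.le hPt0 hPt1
    _ ≤ _ := le_mul_of_one_le_left (by positivity) hpow

end qGamma

def qBessel2Coeff (q ν : ℝ) (i : ℕ) : ℝ :=
  q ^ (2 * (i : ℝ) * ((i : ℝ) + ν)) * (-1 : ℝ) ^ i /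
    (qFact (q ^ 2) i * qGamma (q ^ 2) ((i : ℝ) + ν + 1))

def qBessel2Series (q ν y : ℝ) : ℝ := ∑' i : ℕ, qBessel2Coeff q ν i * y ^ (2 * i)

lemma qBessel2_eq_series (q ν x : ℝ) :
    qBessel2 q ν x = q ^ (ν ^ 2) * (x / (1 + q)) ^ ν * qBessel2Series q ν (x / (1 + q)) :=
  rfl

section qBessel2

variable {q : ℝ}

lemma summable_qBessel2Coeff_mul_pow (hq0 : 0 < q) (hq1 : q < 1) (ν y : ℝ) :
    Summable fun i : ℕ => qBessel2Coeff q ν i * y ^ (2 * i) := by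
  have hq2_0 : 0 < q ^ 2 := by positivity
  have hq2_1 : q ^ 2 < 1 := by nlinarith
  set P := qPochInf (q ^ 2) (q ^ 2)
  have hP : 0 < P := qPochInf_pos hq2_0.le hq2_1 hq2_0.le hq2_1
  set r : ℕ → ℝ := fun i => q ^ (2 * ν) * y ^ 2 * (q ^ 2) ^ i
  have hr : Tendsto r atTop (𝓝 0) := by
    simpa using
      (tendsto_pow_atTop_nhds_zero_of_lt_one hq2_0.le hq2_1).const_mul (q ^ (2 * ν) * y ^ 2)
  refine Summable.of_norm_bounded_eventually_nat (summable_geometric_two.mul_left P⁻¹) ?_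
  -- Discarding the finitely many `i < -ν` is what lets `ν` be arbitrary.
  filter_upwards [hr.eventually (eventually_le_nhds (by norm_num : (0 : ℝ) < 1 / 2)),
    eventually_ge_atTop ⌈-ν⌉₊] with i hri hi
  have hiν : 1 ≤ (i : ℝ) + ν + 1 := by linarith [Nat.ceil_le.1 hi]
  have hden : P ≤ qFact (q ^ 2) i * qGamma (q ^ 2) ((i : ℝ) + ν + 1) :=
    (qPochInf_le_qGamma hq2_0 hq2_1 hiν).trans
      (le_mul_of_one_le_left (qGamma_pos hq2_0 hq2_1 (by linarith)).le
        (one_le_qFact hq2_0 hq2_1 i))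
  have hnum : q ^ (2 * (i : ℝ) * ((i : ℝ) + ν)) * (y ^ 2) ^ i = r i ^ i := by
    rw [show 2 * (i : ℝ) * ((i : ℝ) + ν) = (2 * ν + (2 * i : ℕ)) * i by push_cast; ring,
      rpow_mul_natCast hq0.le, rpow_add_natCast hq0.ne', ← mul_pow]
    simp only [r, pow_mul]
    ring
  have hr0 : 0 ≤ r i := by positivity
  have hterm : qBessel2Coeff q ν i * y ^ (2 * i) =
      (-1) ^ i * (r i ^ i / (qFact (q ^ 2) i * qGamma (q ^ 2) ((i : ℝ) + ν + 1))) := by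
    rw [← hnum, qBessel2Coeff, pow_mul]
    ring
  calc ‖qBessel2Coeff q ν i * y ^ (2 * i)‖
      = r i ^ i / (qFact (q ^ 2) i * qGamma (q ^ 2) ((i : ℝ) + ν + 1)) := by
        rw [hterm, norm_mul, norm_pow, norm_neg, norm_one, one_pow, one_mul,
          Real.norm_of_nonneg (div_nonneg (pow_nonneg hr0 i) (hP.le.trans hden))]
    _ ≤ (1 / 2) ^ i / P := div_le_div₀ (by positivity) (pow_le_pow_left₀ hr0 hri i) hP hden
    _ = P⁻¹ * (1 / 2) ^ i := div_eq_inv_mul _ _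

lemma qBessel2Coeff_mul_sub (hq0 : 0 < q) (hq1 : q < 1) {ν : ℝ} {i : ℕ}
    (hiν : 0 < (i : ℝ) + ν) :
    qBessel2Coeff q ν i * (q ^ (2 * ν) * q ^ (2 * i) - 1) =
      (q ^ 2 - 1) * q ^ (2 * i) * qBessel2Coeff q (ν - 1) i := by
  have hq2_0 : 0 < q ^ 2 := by positivity
  have hq2_1 : q ^ 2 < 1 := by nlinarith
  have hpow : (q ^ 2) ^ ((i : ℝ) + ν) = q ^ (2 * ν) * q ^ (2 * i) := by
    rw [← rpow_natCast q 2, ← rpow_mul hq0.le, ← rpow_natCast q (2 * i), ← rpow_add hq0]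
    push_cast
    ring_nf
  have hexp : q ^ (2 * (i : ℝ) * ((i : ℝ) + ν)) =
      q ^ (2 * (i : ℝ) * ((i : ℝ) + (ν - 1))) * q ^ (2 * i) := by
    rw [← rpow_natCast q (2 * i), ← rpow_add hq0]
    push_cast
    ring_nf
  have hqNum_eq : qNum (q ^ 2) ((i : ℝ) + ν) * (q ^ 2 - 1) = q ^ (2 * ν) * q ^ (2 * i) - 1 := by
    rw [qNum, hpow, div_mul_cancel₀ _ (by linarith)]
  rw [qBessel2Coeff, qBessel2Coeff, show (i : ℝ) + (ν - 1) + 1 = i + ν by ring,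
    qGamma_add_one hq2_0 hq2_1 hiν, ← hqNum_eq, hexp]
  have := qNum_pos hq2_0 hq2_1 hiν
  have := one_le_qFact hq2_0 hq2_1 i
  have := qGamma_pos hq2_0 hq2_1 hiν
  field_simp

lemma qBessel2Series_sub (hq0 : 0 < q) (hq1 : q < 1) {ν : ℝ} (hν : 0 < ν) (y : ℝ) :
    q ^ (2 * ν) * qBessel2Series q ν (q * y) - qBessel2Series q ν y =
      (q ^ 2 - 1) * qBessel2Series q (ν - 1) (q * y) := by
  rw [qBessel2Series, qBessel2Series, qBessel2Series, ← tsum_mul_left, ← tsum_mul_left,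
    ← ((summable_qBessel2Coeff_mul_pow hq0 hq1 ν (q * y)).mul_left _).tsum_sub
      (summable_qBessel2Coeff_mul_pow hq0 hq1 ν y)]
  refine tsum_congr fun i => ?_
  linear_combination y ^ (2 * i) * qBessel2Coeff_mul_sub hq0 hq1 (by positivity : 0 < (i : ℝ) + ν)

end qBessel2

/-- `∂^q_u (u^ν J^{(2)}_ν(u|q²)) = q^ν u^ν J^{(2)}_{ν-1}(qu|q²)`
for `ν > 0` and `u > 0`. -/
theorem qBessel2_qDeriv_mul (q : ℝ) (hq0 : 0 < q) (hq1 : q < 1)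
    (ν : ℝ) (hν : ν > 0) (u : ℝ) (hu0 : 0 < u) :
    qDeriv q (fun s => s ^ ν * qBessel2 q ν s) u =
      q ^ ν * u ^ ν * qBessel2 q (ν - 1) (q * u) := by
  obtain ⟨x, hx, rfl⟩ : ∃ x, 0 < x ∧ u = (1 + q) * x :=
    ⟨u / (1 + q), by positivity, by field_simp⟩
  have hx_eq : (1 + q) * x / (1 + q) = x := by field_simp
  have hqx_eq : q * ((1 + q) * x) / (1 + q) = q * x := by field_simp
  have hpow_two : q ^ (2 * ν) = q ^ ν * q ^ ν := by
    rw [← rpow_add hq0, two_mul]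
  have hpow_sq : q ^ ν * q ^ ((ν - 1) ^ 2) * q ^ (ν - 1) = q ^ (ν ^ 2) := by
    rw [← rpow_add hq0, ← rpow_add hq0]
    ring_nf
  have hxpow : x ^ ν = x ^ (ν - 1) * x := by
    rw [rpow_sub_one hx.ne', div_mul_cancel₀ _ hx.ne']
  have hseries := qBessel2Series_sub hq0 hq1 hν x
  rw [hpow_two] at hseries
  simp only [qDeriv, qBessel2_eq_series, hx_eq, hqx_eq]
  rw [mul_rpow hq0.le (by positivity), mul_rpow hq0.le hx.le, mul_rpow hq0.le hx.le,
    div_eq_iff (by nlinarith)]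
  set A := ((1 + q) * x) ^ ν
  set S' := qBessel2Series q (ν - 1) (q * x)
  linear_combination (A * q ^ (ν ^ 2) * x ^ ν) * hseries
    - (A * (q ^ 2 - 1) * S' * x ^ (ν - 1) * x) * hpow_sq
    + (A * q ^ (ν ^ 2) * (q ^ 2 - 1) * S') * hxpow
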